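/- Let -1 < s < 1. There exists a constant c = c(s) > 0 such that for every real κ ≥ 1 and every ξ ∈ ℝ with |ξ| ≥ κ, ∑_{k=1}^∞ (κ 2^k)^{2s} w(ξ; κ 2^k) ≥ c |ξ|^{2s}. -/

import Mathlib

open Real

/-- The multiplier `w(ξ; m) = 3m²ξ² / (4(ξ² + m²)(ξ² + 4m²))`. -/
noncomputable def w (ξ m : ℝ) : ℝ :=
  3 * m ^ 2 * ξ ^ 2 / (4 * (ξ ^ 2 + m ^ 2) * (ξ ^ 2 + 4 * m ^ 2))

/-! The dyadic scale `m = κ 2^(k+1)` with `|ξ| ≤ m ≤ 2|ξ|` alone contributes `≳ |ξ|^(2s)`,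
since `w(ξ; m) ≥ 3/160` there and `m^(2s)` is comparable to `|ξ|^(2s)`. All terms are nonnegative,
and the series converges because `w(ξ; m) ≤ 3ξ²/(16m²)` and `2s < 2`. -/

lemma w_nonneg (ξ m : ℝ) : 0 ≤ w ξ m := by
  unfold w; positivity

lemma w_le {m : ℝ} (ξ : ℝ) (hm : 0 < m) : w ξ m ≤ 3 * ξ ^ 2 / (16 * m ^ 2) := by
  unfold w
  rw [div_le_div_iff₀ (by positivity) (by positivity)]
  have : 4 * m ^ 4 ≤ (ξ ^ 2 + m ^ 2) * (ξ ^ 2 + 4 * m ^ 2) := by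
    nlinarith [sq_nonneg ξ, sq_nonneg m]
  nlinarith [mul_le_mul_of_nonneg_left this (by positivity : (0:ℝ) ≤ 3 * ξ ^ 2 * m ^ 2)]

lemma three_div_160_le_w {ξ m : ℝ} (hm : 0 < m) (hξm : |ξ| ≤ m) (hmξ : m ≤ 2 * |ξ|) :
    3 / 160 ≤ w ξ m := by
  unfold w
  rw [← sq_abs ξ, div_le_div_iff₀ (by norm_num) (by positivity)]
  have h₁ : |ξ| ^ 2 ≤ m ^ 2 := by gcongr
  have h₂ : m ^ 2 ≤ 4 * |ξ| ^ 2 := by nlinarith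
  have h₃ : (|ξ| ^ 2 + m ^ 2) * (|ξ| ^ 2 + 4 * m ^ 2) ≤ 2 * m ^ 2 * (5 * m ^ 2) := by
    gcongr <;> linarith
  nlinarith [mul_le_mul_of_nonneg_left h₂ (sq_nonneg m)]

lemma rpow_mul_w_le {m : ℝ} (p ξ : ℝ) (hm : 0 < m) :
    m ^ p * w ξ m ≤ 3 * ξ ^ 2 / 16 * m ^ (p - 2) := by
  calc m ^ p * w ξ m ≤ m ^ p * (3 * ξ ^ 2 / (16 * m ^ 2)) := by
        gcongr; exact w_le ξ hm
    _ = 3 * ξ ^ 2 / 16 * m ^ (p - 2) := by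
        rw [rpow_sub hm, rpow_two]; field_simp

lemma mul_two_pow_rpow {κ : ℝ} (hκ : 0 ≤ κ) (p : ℝ) (n : ℕ) :
    (κ * 2 ^ n) ^ p = κ ^ p * ((2 : ℝ) ^ p) ^ n := by
  rw [mul_rpow hκ (by positivity), rpow_pow_comm zero_le_two]

lemma summable_dyadic_rpow_mul_w {p κ : ℝ} (ξ : ℝ) (hp : p < 2) (hκ : 0 < κ) :
    Summable fun k : ℕ => (κ * 2 ^ (k + 1)) ^ p * w ξ (κ * 2 ^ (k + 1)) := by
  have hr : (2 : ℝ) ^ (p - 2) < 1 := rpow_lt_one_of_one_lt_of_neg one_lt_two (by linarith)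
  have hgeom := ((summable_nat_add_iff 1).mpr
    (summable_geometric_of_lt_one (by positivity) hr)).mul_left (3 * ξ ^ 2 / 16 * κ ^ (p - 2))
  refine .of_nonneg_of_le (fun k => mul_nonneg (by positivity) (w_nonneg _ _)) (fun k => ?_) hgeom
  calc _ ≤ 3 * ξ ^ 2 / 16 * (κ * 2 ^ (k + 1)) ^ (p - 2) := rpow_mul_w_le p ξ (by positivity)
    _ = _ := by rw [mul_two_pow_rpow hκ.le, mul_assoc]

lemma exists_mul_two_pow_succ_near {κ x : ℝ} (hκ : 0 < κ) (hκx : κ ≤ x) :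
    ∃ k : ℕ, x ≤ κ * 2 ^ (k + 1) ∧ κ * 2 ^ (k + 1) ≤ 2 * x := by
  obtain ⟨k, hk₁, hk₂⟩ := exists_nat_pow_near ((one_le_div hκ).mpr hκx) one_lt_two
  refine ⟨k, ?_, ?_⟩
  · rw [div_lt_iff₀ hκ] at hk₂; linarith
  · rw [le_div_iff₀ hκ] at hk₁; rw [pow_succ]; linarith

lemma min_one_two_rpow_mul_le {p x m : ℝ} (hx : 0 < x) (hxm : x ≤ m) (hm : m ≤ 2 * x) :
    min 1 ((2 : ℝ) ^ p) * x ^ p ≤ m ^ p := by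
  rcases le_total 0 p with hp | hp
  · calc min 1 ((2 : ℝ) ^ p) * x ^ p ≤ 1 * x ^ p := by gcongr; exact min_le_left _ _
      _ ≤ m ^ p := by rw [one_mul]; exact rpow_le_rpow hx.le hxm hp
  · calc min 1 ((2 : ℝ) ^ p) * x ^ p ≤ 2 ^ p * x ^ p := by gcongr; exact min_le_right _ _
      _ = (2 * x) ^ p := (mul_rpow zero_le_two hx.le).symm
      _ ≤ m ^ p := rpow_le_rpow_of_nonpos (hx.trans_le hxm) hm hp

theorem stmt_11_general (s : ℝ) (hs₂ : s < 1) :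
    ∃ c : ℝ, 0 < c ∧ ∀ κ : ℝ, 1 ≤ κ → ∀ ξ : ℝ, κ ≤ |ξ| →
      c * |ξ| ^ (2 * s) ≤ ∑' k : ℕ, (κ * 2 ^ (k + 1)) ^ (2 * s) * w ξ (κ * 2 ^ (k + 1)) := by
  refine ⟨3 / 160 * min 1 ((2 : ℝ) ^ (2 * s)), by positivity, fun κ hκ ξ hξ => ?_⟩
  have hκ₀ : 0 < κ := one_pos.trans_le hκ
  obtain ⟨k, hξm, hmξ⟩ := exists_mul_two_pow_succ_near hκ₀ hξ
  have hm : 0 < κ * 2 ^ (k + 1) := by positivity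
  calc 3 / 160 * min 1 ((2 : ℝ) ^ (2 * s)) * |ξ| ^ (2 * s)
      ≤ (κ * 2 ^ (k + 1)) ^ (2 * s) * w ξ (κ * 2 ^ (k + 1)) := by
        rw [mul_assoc, mul_comm]
        exact mul_le_mul (min_one_two_rpow_mul_le (hκ₀.trans_le hξ) hξm hmξ)
          (three_div_160_le_w hm hξm hmξ) (by norm_num) (by positivity)
    _ ≤ _ := (summable_dyadic_rpow_mul_w ξ (by linarith) hκ₀).le_tsum k
        fun j _ => mul_nonneg (by positivity) (w_nonneg _ _)

/-- Let `-1 < s < 1`. There exists `c = c(s) > 0` such that for every real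
`κ ≥ 1` and every `ξ ∈ ℝ` with `|ξ| ≥ κ`,
`∑_{k=1}^∞ (κ 2^k)^{2s} w(ξ; κ 2^k) ≥ c |ξ|^{2s}`. -/
theorem stmt_11 (s : ℝ) (hs₁ : -1 < s) (hs₂ : s < 1) :
    ∃ c : ℝ, 0 < c ∧ ∀ κ : ℝ, 1 ≤ κ → ∀ ξ : ℝ, κ ≤ |ξ| →
      c * |ξ| ^ (2 * s) ≤ ∑' k : ℕ, (κ * 2 ^ (k + 1)) ^ (2 * s) * w ξ (κ * 2 ^ (k + 1)) :=
  stmt_11_general s hs₂
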